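/- Let b₀ be a natural number, B a nonempty finite set of natural numbers with b₀ < min B, and C a nonempty finite set of natural numbers with b₀ ≤ min C and max C < max B. Then the natural number (Σ_{λ: b₀ ≤ λ ≤ max B, λ ∉ B} 2^λ) + Σ_{c∈C} 2^c has a binary digit at some position belonging to B ∪ C. -/

import Mathlib

open Finset

lemma sum_range_two_pow (n : ℕ) : ∑ i ∈ Finset.range n, 2 ^ i = 2 ^ n - 1 := by
  induction n with
  | zero => simp
  | succ n ih =>
    rw [Finset.sum_range_succ, ih]
    have : 0 < 2 ^ n := Nat.two_pow_pos n
    omega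

lemma aux_no_bits (F : Finset ℕ) : ∀ n N : ℕ, F ⊆ Finset.range n → N < 2 ^ n →
    (∀ b ∈ F, N.testBit b = false) → N + ∑ b ∈ F, 2 ^ b < 2 ^ n := by
  induction F using Finset.strongInduction with
  | _ F ih =>
    intro n N hFsub hN hbits
    rcases F.eq_empty_or_nonempty with rfl | hF
    · simpa using hN
    · set b := F.max' hF with hbdef
      have hbF : b ∈ F := F.max'_mem hF
      have hbn : b < n := Finset.mem_range.mp (hFsub hbF)
      have hbit : N.testBit b = false := hbits b hbF
      -- N % 2^(b+1) < 2^b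
      have hmodmul : N % (2 ^ b * 2) = N % 2 ^ b + 2 ^ b * (N / 2 ^ b % 2) :=
        Nat.mod_mul
      have hdiv2 : N / 2 ^ b % 2 = 0 := by
        rw [Nat.testBit_eq_decide_div_mod_eq] at hbit
        simp at hbit
        omega
      have hpow : (2 : ℕ) ^ (b + 1) = 2 ^ b * 2 := by ring
      have hrlt : N % 2 ^ (b + 1) < 2 ^ b := by
        rw [hpow, hmodmul, hdiv2]
        have := Nat.mod_lt N (show 0 < 2 ^ b from Nat.two_pow_pos b)
        omega
      set r := N % 2 ^ (b + 1) with hr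
      -- apply IH to F.erase b
      have hsub' : F.erase b ⊆ Finset.range b := by
        intro x hx
        rw [Finset.mem_erase] at hx
        exact Finset.mem_range.mpr (lt_of_le_of_ne (F.le_max' x hx.2) hx.1)
      have hbits' : ∀ x ∈ F.erase b, r.testBit x = false := by
        intro x hx
        have hxb : x < b + 1 := Nat.lt_succ_of_lt (Finset.mem_range.mp (hsub' hx))
        rw [hr, Nat.testBit_mod_two_pow]
        simp [hxb, hbits x (Finset.mem_of_mem_erase hx)]
      have hih := ih (F.erase b) (Finset.erase_ssubset hbF) b r hsub' hrlt hbits'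
      -- arithmetic
      have hsumsplit : ∑ x ∈ F.erase b, 2 ^ x + 2 ^ b = ∑ x ∈ F, 2 ^ x :=
        Finset.sum_erase_add F _ hbF
      have hdm : 2 ^ (b + 1) * (N / 2 ^ (b + 1)) + r = N := Nat.div_add_mod N (2 ^ (b + 1))
      have hqlt : N / 2 ^ (b + 1) < 2 ^ (n - (b + 1)) := by
        apply Nat.div_lt_of_lt_mul
        calc N < 2 ^ n := hN
          _ = 2 ^ (b + 1) * 2 ^ (n - (b + 1)) := by
              rw [← pow_add]
              congr 1
              omega
      have hfin : 2 ^ (b + 1) * (N / 2 ^ (b + 1) + 1) ≤ 2 ^ n := by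
        calc 2 ^ (b + 1) * (N / 2 ^ (b + 1) + 1)
            ≤ 2 ^ (b + 1) * 2 ^ (n - (b + 1)) :=
              Nat.mul_le_mul_left _ (by omega)
          _ = 2 ^ n := by rw [← pow_add]; congr 1; omega
      have hexp : 2 ^ (b + 1) = 2 ^ b * 2 := by ring
      nlinarith [hih, hdm, hsumsplit, hfin]

theorem exists_testBit_mem_union_of_gap_sum
    (b₀ : ℕ) (B C : Finset ℕ) (hB : B.Nonempty) (hC : C.Nonempty)
    (hb₀B : b₀ < B.min' hB) (hb₀C : b₀ ≤ C.min' hC) (hCB : C.max' hC < B.max' hB) :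
    ∃ j ∈ B ∪ C,
      ((∑ l ∈ (Finset.Icc b₀ (B.max' hB)) \ B, 2 ^ l) + ∑ c ∈ C, 2 ^ c).testBit j
        = true := by
  set M := B.max' hB with hM
  set N := (∑ l ∈ (Finset.Icc b₀ M) \ B, 2 ^ l) + ∑ c ∈ C, 2 ^ c with hN
  have hb₀M : b₀ < M := lt_of_lt_of_le hb₀B (B.min'_le (B.max' hB) (B.max'_mem hB))
  have hBsub : B ⊆ Finset.Icc b₀ M := by
    intro b hb
    exact Finset.mem_Icc.mpr ⟨le_of_lt (lt_of_lt_of_le hb₀B (B.min'_le b hb)), B.le_max' b hb⟩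
  have hkey : (∑ l ∈ (Finset.Icc b₀ M) \ B, 2 ^ l) + ∑ b ∈ B, 2 ^ b
      = ∑ l ∈ Finset.Icc b₀ M, 2 ^ l := Finset.sum_sdiff hBsub
  have hIccSum : ∀ a m : ℕ, a ≤ m + 1 →
      ∑ l ∈ Finset.Icc a m, (2 : ℕ) ^ l = 2 ^ (m + 1) - 2 ^ a := by
    intro a m ham
    have h1 : Finset.Icc a m = Finset.Ico a (m + 1) := (Finset.Ico_add_one_right_eq_Icc a m).symm
    have h2 : (∑ l ∈ Finset.Ico 0 a, (2:ℕ) ^ l) + ∑ l ∈ Finset.Ico a (m + 1), (2:ℕ) ^ l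
        = ∑ l ∈ Finset.Ico 0 (m + 1), (2:ℕ) ^ l :=
      Finset.sum_Ico_consecutive _ (Nat.zero_le a) ham
    rw [← Finset.range_eq_Ico, ← Finset.range_eq_Ico] at h2
    rw [sum_range_two_pow, sum_range_two_pow] at h2
    have ha : (1:ℕ) ≤ 2 ^ a := Nat.one_le_two_pow
    have hm : (2:ℕ) ^ a ≤ 2 ^ (m + 1) := Nat.pow_le_pow_right (by norm_num) ham
    rw [h1]
    omega
  have hIcc : ∑ l ∈ Finset.Icc b₀ M, (2:ℕ) ^ l = 2 ^ (M + 1) - 2 ^ b₀ :=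
    hIccSum b₀ M (by omega)
  -- bounds on sums
  have hCmm : C.min' hC ≤ C.max' hC := C.min'_le (C.max' hC) (C.max'_mem hC)
  have hCsub : C ⊆ Finset.Icc b₀ (C.max' hC) := by
    intro c hc
    exact Finset.mem_Icc.mpr ⟨le_trans hb₀C (C.min'_le c hc), C.le_max' c hc⟩
  have hCle : ∑ c ∈ C, (2:ℕ) ^ c ≤ 2 ^ (C.max' hC + 1) - 2 ^ b₀ := by
    calc ∑ c ∈ C, (2:ℕ) ^ c ≤ ∑ c ∈ Finset.Icc b₀ (C.max' hC), 2 ^ c :=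
          Finset.sum_le_sum_of_subset hCsub
      _ = 2 ^ (C.max' hC + 1) - 2 ^ b₀ := hIccSum b₀ (C.max' hC) (by omega)
  have hCM : 2 ^ (C.max' hC + 1) ≤ (2:ℕ) ^ M := Nat.pow_le_pow_right (by norm_num) (by omega)
  have hCge : (2:ℕ) ^ b₀ ≤ ∑ c ∈ C, 2 ^ c := by
    calc (2:ℕ) ^ b₀ ≤ 2 ^ (C.min' hC) := Nat.pow_le_pow_right (by norm_num) hb₀C
      _ ≤ ∑ c ∈ C, 2 ^ c :=
          Finset.single_le_sum (fun i _ => Nat.zero_le _) (C.min'_mem hC)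
  have hBge : (2:ℕ) ^ M ≤ ∑ b ∈ B, 2 ^ b :=
    Finset.single_le_sum (fun i _ => Nat.zero_le _) (B.max'_mem hB)
  have hb₀pos : (1:ℕ) ≤ 2 ^ b₀ := Nat.one_le_two_pow
  have hMpow : (2:ℕ) ^ b₀ ≤ 2 ^ (M + 1) := Nat.pow_le_pow_right (by norm_num) (by omega)
  -- N < 2^(M+1)
  have hNlt : N < 2 ^ (M + 1) := by
    have hsd : ∑ l ∈ (Finset.Icc b₀ M) \ B, (2:ℕ) ^ l
        = (2 ^ (M + 1) - 2 ^ b₀) - ∑ b ∈ B, 2 ^ b := by omega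
    omega
  -- N + ∑_B ≥ 2^(M+1)
  have hNge : 2 ^ (M + 1) ≤ N + ∑ b ∈ B, 2 ^ b := by omega
  by_contra h
  push_neg at h
  have hbitsB : ∀ b ∈ B, N.testBit b = false := by
    intro b hb
    have := h b (Finset.mem_union_left C hb)
    simpa using this
  have hBrange : B ⊆ Finset.range (M + 1) := by
    intro b hb
    exact Finset.mem_range.mpr (Nat.lt_succ_of_le (B.le_max' b hb))
  have := aux_no_bits B (M + 1) N hBrange hNlt hbitsB
  omega
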